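/- arXiv:2106.13357 — 3 statements merged into one kernel-verified Lean document; each statement's English description precedes it below -/
import Mathlib

section
/- Let G be a finite simple graph in which every vertex has degree 1 or 3, and suppose G admits an in-out-proper orientation D with |d_D^±(v)| ≤ 2 for all v. Then every in-out-degree in D belongs to {-1, +1} and G is bipartite. -/
/-!
Since `d^±(v) = deg v - 2 d^+(v)`, every in-out-degree is odd here, so `|d^±(v)| ≤ 2` forces
`d^±(v) = ±1`. Properness then says adjacent vertices carry opposite signs: the sign is a
2-colouring.
-/

/-- An orientation of a simple graph `G`: for each edge `{u,v}` exactly one of the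
two directions is chosen. `dir u v = true` means the arc goes from `u` to `v`. -/
structure Orient {V : Type*} (G : SimpleGraph V) where
  dir : V → V → Bool
  consistent : ∀ u v, G.Adj u v → dir u v = !dir v u

variable {V : Type*}

/-- In-degree of `v` in the orientation `D`. -/
def inDeg [Fintype V] (G : SimpleGraph V) [DecidableRel G.Adj] (D : Orient G) (v : V) : ℕ :=
  (Finset.univ.filter (fun u => G.Adj u v ∧ D.dir u v = true)).card

/-- Out-degree of `v` in the orientation `D`. -/
def outDeg [Fintype V] (G : SimpleGraph V) [DecidableRel G.Adj] (D : Orient G) (v : V) : ℕ :=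
  (Finset.univ.filter (fun u => G.Adj u v ∧ D.dir v u = true)).card

/-- In-out-degree `d_D^±(v) = d_D^-(v) - d_D^+(v)`. -/
def ioDeg [Fintype V] (G : SimpleGraph V) [DecidableRel G.Adj] (D : Orient G) (v : V) : ℤ :=
  (inDeg G D v : ℤ) - (outDeg G D v : ℤ)

/-- An orientation is in-out-proper if adjacent vertices have distinct in-out-degrees. -/
def IsIOProper [Fintype V] (G : SimpleGraph V) [DecidableRel G.Adj] (D : Orient G) : Prop :=
  ∀ u v, G.Adj u v → ioDeg G D u ≠ ioDeg G D v

section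

variable [Fintype V] (G : SimpleGraph V) [DecidableRel G.Adj] (D : Orient G)

lemma inDeg_add_outDeg (v : V) : inDeg G D v + outDeg G D v = G.degree v := by
  have hin : inDeg G D v = ((G.neighborFinset v).filter fun u => D.dir u v = true).card := by
    simp only [inDeg, SimpleGraph.neighborFinset_eq_filter, Finset.filter_filter, G.adj_comm v]
  have hout : outDeg G D v = ((G.neighborFinset v).filter fun u => ¬D.dir u v = true).card := by
    rw [outDeg, SimpleGraph.neighborFinset_eq_filter, Finset.filter_filter]
    refine congrArg Finset.card (Finset.filter_congr fun u _ => ?_)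
    rw [G.adj_comm]
    refine and_congr_right fun huv => ?_
    rw [D.consistent v u huv]
    cases D.dir u v <;> simp
  rw [hin, hout, Finset.card_filter_add_card_filter_not, SimpleGraph.card_neighborFinset_eq_degree]

lemma ioDeg_eq_degree_sub (v : V) : ioDeg G D v = G.degree v - 2 * outDeg G D v := by
  rw [ioDeg, ← inDeg_add_outDeg G D v]
  push_cast
  ring

lemma ioDeg_eq_one_or_neg_one {v : V} (hodd : Odd (G.degree v)) (hb : |ioDeg G D v| ≤ 2) :
    ioDeg G D v = 1 ∨ ioDeg G D v = -1 := by
  obtain ⟨k, hk⟩ := hodd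
  have h := ioDeg_eq_degree_sub G D v
  rw [abs_le] at hb
  omega

end

lemma SimpleGraph.colorable_two_of_forall_eq_or_eq {α : Type*} (G : SimpleGraph V)
    (f : V → α) {a b : α} (hf : ∀ v, f v = a ∨ f v = b)
    (hproper : ∀ u v, G.Adj u v → f u ≠ f v) : G.Colorable 2 := by
  classical
  refine (SimpleGraph.Coloring.mk (fun v => decide (f v = a)) fun {u v} huv => ?_).colorable
  have hne := hproper u v huv
  rcases hf u with hu | hu <;> rcases hf v with hv | hv <;> simp_all [Ne.symm]

/-- If every vertex of `G` has degree 1 or 3 and `G` has an in-out-proper orientation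
with all `|d^±| ≤ 2`, then all in-out-degrees are `±1` and `G` is bipartite. -/
theorem stmt_11 [Fintype V] (G : SimpleGraph V) [DecidableRel G.Adj]
    (hdeg : ∀ v, G.degree v = 1 ∨ G.degree v = 3)
    (D : Orient G) (hD : IsIOProper G D) (hb : ∀ v, |ioDeg G D v| ≤ 2) :
    (∀ v, ioDeg G D v = 1 ∨ ioDeg G D v = -1) ∧ G.Colorable 2 := by
  have hpm : ∀ v, ioDeg G D v = 1 ∨ ioDeg G D v = -1 := fun v =>
    ioDeg_eq_one_or_neg_one G D (by rcases hdeg v with h | h <;> rw [h] <;> decide) (hb v)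
  exact ⟨hpm, G.colorable_two_of_forall_eq_or_eq (ioDeg G D) hpm hD⟩
end

section
/- Every path P_n = v_1, v_2, ..., v_n with n ≥ 3 vertices admits, for each choice of signs (ε_1, ε_n) ∈ {−1, +1}², an in-out-proper orientation D with d_D^±(v_1) = ε_1, d_D^±(v_n) = ε_n, and |d_D^±(v_i)| ≤ 2 for every vertex v_i. -/
variable {V : Type*}

/-!
Orient the edge `{v_i, v_{i+1}}` either way and record this as a sign `σ_i`, which is `1` when
the edge points to `v_{i+1}` and `-1` otherwise. Then `d^±(v_1) = -σ_1`, `d^±(v_n) = σ_{n-1}` and `d^±(v_k) = σ_{k-1} - σ_k ∈ {-2, 0, 2}` for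
an inner vertex. So endpoints have odd and inner vertices even in-out-degree, and two adjacent
inner vertices can only clash when three consecutive edges point the same way. Choosing `σ_1`
and `σ_{n-1}` as the endpoint signs demand and letting the signs alternate from the second edge
on therefore works; for `n ≥ 3` the first and last edge are distinct, so both choices are free.
-/

def arcSign (b : Bool) : ℤ := if b then 1 else -1

lemma arcSign_eq_one_or_eq_neg_one (b : Bool) : arcSign b = 1 ∨ arcSign b = -1 := by
  cases b <;> simp [arcSign]

lemma arcSign_not (b : Bool) : arcSign (!b) = -arcSign b := by
  cases b <;> rfl

lemma arcSign_sub_ne_sub {a b c : Bool} (h : ¬(a = b ∧ b = c)) :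
    arcSign a - arcSign b ≠ arcSign b - arcSign c := by
  cases a <;> cases b <;> cases c <;> simp_all [arcSign]

lemma exists_arcSign_eq {ε : ℤ} (hε : ε = 1 ∨ ε = -1) : ∃ b, arcSign b = ε := by
  rcases hε with rfl | rfl
  exacts [⟨true, rfl⟩, ⟨false, rfl⟩]

lemma ioDeg_eq_sum [Fintype V] (G : SimpleGraph V) [DecidableRel G.Adj] (D : Orient G) (v : V) :
    ioDeg G D v = ∑ u, if G.Adj u v then arcSign (D.dir u v) else 0 := by
  rw [ioDeg, inDeg, outDeg, Finset.card_filter, Finset.card_filter, Nat.cast_sum, Nat.cast_sum,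
    ← Finset.sum_sub_distrib]
  refine Finset.sum_congr rfl fun u _ => ?_
  by_cases h : G.Adj u v
  · rw [D.consistent v u h.symm]
    cases D.dir u v <;> simp [h, arcSign]
  · simp [h]

lemma Bool.exists_seq_alternating_from_one (b t : Bool) {m : ℕ} (hm : 0 < m) :
    ∃ f : ℕ → Bool, f 0 = b ∧ f m = t ∧ ∀ i, f (i + 1) ≠ f (i + 2) := by
  refine ⟨fun i => if i = 0 then b else xor t (m + i).bodd, by simp, ?_, fun i => ?_⟩
  · simp [hm.ne', Nat.bodd_add]
  · simp [← add_assoc, Nat.bodd_succ]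

open SimpleGraph

-- The paper's `v_{i+1}` is `i : Fin n`; the edge `{i, i + 1}` points to `i + 1` iff `f i`.
def pathOrient (n : ℕ) (f : ℕ → Bool) : Orient (pathGraph n) where
  dir u v := if u.val + 1 = v.val then f u else if v.val + 1 = u.val then !f v else false
  consistent u v huv := by
    rw [pathGraph_adj] at huv
    rcases huv with h | h
    · simp [h, show v.val + 1 ≠ u.val by omega]
    · simp [h, show u.val + 1 ≠ v.val by omega]

section pathOrient

variable {n : ℕ} [DecidableRel (pathGraph n).Adj]

lemma ioDeg_pathOrient (f : ℕ → Bool) (v : Fin n) :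
    ioDeg _ (pathOrient n f) v =
      (if 0 < v.val then arcSign (f (v - 1)) else 0) -
        (if v.val + 1 < n then arcSign (f v) else 0) := by
  have summand (u : Fin n) :
      (if (pathGraph n).Adj u v then arcSign ((pathOrient n f).dir u v) else 0) =
        (if u.val + 1 = v.val then arcSign (f u) else 0) -
          (if v.val + 1 = u.val then arcSign (f v) else 0) := by
    simp only [pathGraph_adj, pathOrient]
    split_ifs <;> first | omega | simp [arcSign_not]
  rw [ioDeg_eq_sum, Finset.sum_congr rfl fun u _ => summand u, Finset.sum_sub_distrib,
    Fin.sum_univ_eq_sum_range (fun i => if i + 1 = v.val then arcSign (f i) else 0),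
    Fin.sum_univ_eq_sum_range (fun i => if v.val + 1 = i then arcSign (f v) else 0),
    Finset.sum_ite_eq]
  obtain ⟨_ | k, hk⟩ := v
  · simp
  · simp [Finset.sum_ite_eq']
    omega

lemma abs_ioDeg_pathOrient_le_two (f : ℕ → Bool) (v : Fin n) :
    |ioDeg _ (pathOrient n f) v| ≤ 2 := by
  have := arcSign_eq_one_or_eq_neg_one (f (v - 1))
  have := arcSign_eq_one_or_eq_neg_one (f v)
  rw [ioDeg_pathOrient, abs_le]
  split_ifs <;> omega

lemma isIOProper_pathOrient {f : ℕ → Bool}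
    (hf : ∀ i, i + 3 < n → ¬(f i = f (i + 1) ∧ f (i + 1) = f (i + 2))) :
    IsIOProper _ (pathOrient n f) := by
  have succ_ne (u v : Fin n) (huv : u.val + 1 = v.val) :
      ioDeg _ (pathOrient n f) u ≠ ioDeg _ (pathOrient n f) v := by
    obtain ⟨k, hk⟩ := u
    obtain ⟨_, hv⟩ := v
    subst huv
    simp only [ioDeg_pathOrient, Nat.add_sub_cancel, if_pos hv, if_pos k.succ_pos]
    have := arcSign_eq_one_or_eq_neg_one (f k)
    have := arcSign_eq_one_or_eq_neg_one (f (k + 1))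
    -- an endpoint against an inner vertex is settled by parity
    rcases k with _ | j
    · split_ifs <;> omega
    · have := arcSign_eq_one_or_eq_neg_one (f j)
      simp only [j.succ_pos, if_true, Nat.add_sub_cancel]
      split_ifs with h
      · exact arcSign_sub_ne_sub (hf j h)
      · omega
  intro u v huv
  rcases pathGraph_adj.mp huv with h | h
  exacts [succ_ne u v h, (succ_ne v u h).symm]

end pathOrient

/-- Every path `P_n` (`n ≥ 3`) has, for each choice of signs at the two endpoints, an
in-out-proper orientation realizing those endpoint in-out-degrees with all `|d^±| ≤ 2`. -/
theorem stmt_13 (n : ℕ) (hn : 3 ≤ n) [DecidableRel (SimpleGraph.pathGraph n).Adj]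
    (ε₁ εₙ : ℤ) (h1 : ε₁ = 1 ∨ ε₁ = -1) (h2 : εₙ = 1 ∨ εₙ = -1) :
    ∃ D : Orient (SimpleGraph.pathGraph n), IsIOProper _ D ∧
      ioDeg (SimpleGraph.pathGraph n) D ⟨0, by omega⟩ = ε₁ ∧
      ioDeg (SimpleGraph.pathGraph n) D ⟨n - 1, by omega⟩ = εₙ ∧
      ∀ v, |ioDeg (SimpleGraph.pathGraph n) D v| ≤ 2 := by
  obtain ⟨b, hb⟩ := exists_arcSign_eq (ε := -ε₁) (by omega)
  obtain ⟨t, ht⟩ := exists_arcSign_eq h2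
  obtain ⟨f, hf0, hfm, hf⟩ := Bool.exists_seq_alternating_from_one b t (m := n - 2) (by omega)
  refine ⟨pathOrient n f, isIOProper_pathOrient fun i _ h => hf i h.2, ?_, ?_,
    abs_ioDeg_pathOrient_le_two f⟩
  · simp [ioDeg_pathOrient, show 1 < n by omega, hf0, hb]
  · simp [ioDeg_pathOrient, show 0 < n - 1 by omega, show n - 1 - 1 = n - 2 by omega,
      show ¬n - 1 + 1 < n by omega, hfm, ht]
end

section
/- Let G be a cubic (3-regular) finite simple graph and H its line graph (which is 4-regular). If G admits a proper edge coloring with 3 colors, then H admits an in-out-proper orientation in which every in-out-degree belongs to {-2, 0, 2}; in particular χ↔(H) ≤ 2. -/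
variable {V : Type*}

/-!
Colour the edges of `G` with `0, 1, 2`. The edges of colours `0` and `2` form disjoint even
cycles, so the vertices can be split into two classes such that every edge of colour `0` or `2`
joins the two classes. Orient the line graph at each vertex `w`: if `w` is in the first class, the
three edges at `w` are ordered transitively by colour, otherwise cyclically `0 → 1 → 2 → 0`. An
edge of colour `c` then receives `2c - 2` from an endpoint of the first kind and `0` from one of
the second, so every edge gets in-out-degree exactly `2c - 2`: adjacent edges have distinct
colours, hence distinct in-out-degrees, all in `{-2, 0, 2}`.
-/

open Function Equiv Finset

theorem Function.Involutive.exists_bool_flip {β : Type*} {ι : β → β} (h : Involutive ι)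
    (hne : ∀ x, ι x ≠ x) : ∃ s : β → Bool, ∀ x, s (ι x) = !s x := by
  classical
  refine ⟨fun x => decide (WellOrderingRel x (ι x)), fun x => ?_⟩
  simp only [h x]
  rcases trichotomous_of WellOrderingRel x (ι x) with hlt | heq | hgt
  · simp [hlt, asymm hlt]
  · exact absurd heq.symm (hne x)
  · simp [hgt, asymm hgt]

namespace Equiv.Perm

variable {α : Type*} {a b : Perm α}

theorem mul_zpow_mul_eq_zpow_neg_mul (ha : a⁻¹ = a) (hb : b⁻¹ = b) (j : ℤ) :
    a * (b * a) ^ j = (b * a) ^ (-j) * a := by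
  have h₁ : a * (b * a) * a⁻¹ = (b * a)⁻¹ :=
    (by group : a * (b * a) * a⁻¹ = a * b).trans (by rw [mul_inv_rev, ha, hb])
  rw [zpow_neg, ← inv_zpow, ← h₁, conj_zpow]
  group

/-- The reflections of the infinite dihedral group generated by `a` and `b` are the conjugates
of `a` and of `b`. -/
theorem exists_conj_eq_zpow_mul (ha : a⁻¹ = a) (hb : b⁻¹ = b) (k : ℤ) :
    ∃ c : Perm α, (b * a) ^ k * a = c * a * c⁻¹ ∨ (b * a) ^ k * a = c * b * c⁻¹ := by
  obtain ⟨j, rfl | rfl⟩ := Int.even_or_odd' k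
  · refine ⟨(b * a) ^ j, Or.inl ?_⟩
    rw [← zpow_neg, mul_assoc _ a, mul_zpow_mul_eq_zpow_neg_mul ha hb, neg_neg]
    group
  · refine ⟨(b * a) ^ j, Or.inr ?_⟩
    calc (b * a) ^ (2 * j + 1) * a = (b * a) ^ (j + 1) * (a * (b * a) ^ (-j)) := by
          rw [mul_zpow_mul_eq_zpow_neg_mul ha hb, neg_neg]; group
      _ = (b * a) ^ j * b * (a⁻¹ * a) * (b * a) ^ (-j) := by
          rw [ha, zpow_add_one]; simp only [mul_assoc]
      _ = _ := by group

theorem zpow_apply_apply_ne (ha : a⁻¹ = a) (hb : b⁻¹ = b) (ha' : ∀ x, a x ≠ x)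
    (hb' : ∀ x, b x ≠ x) (k : ℤ) (x : α) : ((b * a) ^ k) (a x) ≠ x := by
  have hconj : ∀ c d : Perm α, (∀ y, d y ≠ y) → (c * d * c⁻¹) x ≠ x := fun c d hd h =>
    hd (c⁻¹ x) (eq_inv_iff_eq.2 (by simpa only [Perm.mul_apply] using h))
  rw [← Perm.mul_apply]
  obtain ⟨c, hc | hc⟩ := exists_conj_eq_zpow_mul ha hb k <;> rw [hc]
  exacts [hconj c a ha', hconj c b hb']

end Equiv.Perm

/-- `σ` maps each orbit of `ρ = τ ∘ σ` to a different orbit, so a flip of this pairing of orbits,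
made constant on each orbit, is flipped by `σ` and hence also by `τ = ρ ∘ σ`. -/
theorem Function.Involutive.exists_bool_flip_of_involutive {α : Type*} {σ τ : α → α}
    (hσ : Involutive σ) (hτ : Involutive τ) (hσ' : ∀ x, σ x ≠ x) (hτ' : ∀ x, τ x ≠ x) :
    ∃ s : α → Bool, (∀ x, s (σ x) = !s x) ∧ ∀ x, s (τ x) = !s x := by
  set a := hσ.toPerm σ
  set b := hτ.toPerm τ
  have ha : a⁻¹ = a := hσ.toPerm_symm
  have hb : b⁻¹ = b := hτ.toPerm_symm
  have hmap (x y : α) (h : (b * a).SameCycle x y) : (b * a).SameCycle (σ x) (σ y) := by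
    obtain ⟨i, rfl⟩ := h
    refine ⟨-i, ?_⟩
    show ((b * a) ^ (-i)) (a x) = a (((b * a) ^ i) x)
    rw [← Perm.mul_apply, ← Perm.mul_zpow_mul_eq_zpow_neg_mul ha hb, Perm.mul_apply]
  let ι : Quotient (Perm.SameCycle.setoid (b * a)) → Quotient (Perm.SameCycle.setoid (b * a)) :=
    Quotient.map' σ hmap
  have hι : Involutive ι := by
    rintro ⟨x⟩
    exact congrArg (Quotient.mk _) (hσ x)
  have hι' : ∀ q, ι q ≠ q := by
    rintro ⟨x⟩ h
    obtain ⟨k, hk⟩ := Quotient.exact h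
    exact Perm.zpow_apply_apply_ne ha hb hσ' hτ' k x hk
  obtain ⟨s, hs⟩ := hι.exists_bool_flip hι'
  have hρ (x : α) : (b * a) (σ x) = τ x := by simp [a, b, hσ x]
  refine ⟨fun x => s ⟦x⟧, fun x => hs ⟦x⟧, fun x => ?_⟩
  rw [← hρ, ← hs ⟦x⟧]
  exact congrArg s (Quotient.sound (Perm.sameCycle_apply_left.2 (Perm.SameCycle.refl _ _)))

theorem Sym2.exists_mem_mem_and_iff {V : Type*} {z z' : Sym2 V} {w : V} (hne : z ≠ z')
    (hw : w ∈ z) (hw' : w ∈ z') (P : V → Prop) : (∃ x, x ∈ z ∧ x ∈ z' ∧ P x) ↔ P w := by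
  refine ⟨fun ⟨x, hx, hx', hP⟩ => ?_, fun hP => ⟨w, hw, hw', hP⟩⟩
  by_cases hxw : x = w
  · exact hxw ▸ hP
  · exact absurd (Sym2.eq_of_ne_mem hxw hx hw hx' hw') hne

namespace SimpleGraph

variable {V α : Type*} {G : SimpleGraph V} {n : ℕ}

theorem Coloring.eq_of_mem_of_mem (C : G.lineGraph.Coloring α) {e e' : G.edgeSet} {w : V}
    (he : w ∈ (e : Sym2 V)) (he' : w ∈ (e' : Sym2 V)) (h : C e = C e') : e = e' := by
  by_contra hne
  exact C.valid (lineGraph_adj_iff_exists.2 ⟨hne, w, he, he'⟩) h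

theorem card_filter_lineGraph_adj [Fintype G.edgeSet] [DecidableEq V]
    [DecidableRel G.lineGraph.Adj] {e : G.edgeSet} {u v : V} (he : (e : Sym2 V) = s(u, v))
    (P : G.edgeSet → Prop) [DecidablePred P] :
    #{e' | G.lineGraph.Adj e' e ∧ P e'} =
      #{e' : G.edgeSet | u ∈ (e' : Sym2 V) ∧ e' ≠ e ∧ P e'} +
        #{e' : G.edgeSet | v ∈ (e' : Sym2 V) ∧ e' ≠ e ∧ P e'} := by
  have huv : u ≠ v := G.ne_of_adj (G.mem_edgeSet.1 (he ▸ e.2))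
  rw [← card_union_of_disjoint]
  · congr 1
    ext e'
    simp only [mem_filter, mem_univ, true_and, mem_union, lineGraph_adj_iff_exists, he,
      Sym2.mem_iff]
    grind
  · refine disjoint_filter.2 fun e' _ hu hv => hv.2.1 (Subtype.ext ?_)
    rw [he]
    exact Sym2.eq_of_ne_mem huv hu.1 hv.1 (Sym2.mem_mk_left u v) (Sym2.mem_mk_right u v)

variable [Fintype V] [DecidableEq V] [DecidableRel G.Adj]

theorem card_filter_mem_edgeSet (w : V) :
    #{e : G.edgeSet | w ∈ (e : Sym2 V)} = G.degree w := by
  rw [← card_incidenceFinset_eq_degree]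
  refine card_nbij Subtype.val (fun e he => ?_) (fun e _ e' _ h => Subtype.ext h) ?_
  · simp only [coe_filter, mem_univ, true_and, Set.mem_ofPred_eq] at he
    simpa [incidenceSet] using And.intro e.2 he
  · intro e he
    simp only [coe_incidenceFinset, incidenceSet, Set.mem_ofPred_eq] at he
    exact ⟨⟨e, he.1⟩, by simpa using he.2, rfl⟩

theorem exists_mem_edgeSet_color {w : V} (hw : G.degree w = n)
    (C : G.lineGraph.Coloring (Fin n)) (c : Fin n) :
    ∃ e : G.edgeSet, w ∈ (e : Sym2 V) ∧ C e = c := by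
  have hinj : Set.InjOn C {e : G.edgeSet | w ∈ (e : Sym2 V)} := fun e he e' he' h =>
    C.eq_of_mem_of_mem he he' h
  have himage : image C {e : G.edgeSet | w ∈ (e : Sym2 V)} = univ := by
    apply eq_univ_of_card
    rw [card_image_of_injOn (by simpa using hinj), card_filter_mem_edgeSet, hw, Fintype.card_fin]
  obtain ⟨e, he, hc⟩ := mem_image.1 (himage ▸ mem_univ c)
  exact ⟨e, by simpa using he, hc⟩

theorem card_filter_mem_edgeSet_color {w : V} (hw : G.degree w = n)
    (C : G.lineGraph.Coloring (Fin n)) (p : Fin n → Prop) [DecidablePred p] :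
    #{e : G.edgeSet | w ∈ (e : Sym2 V) ∧ p (C e)} = #{d | p d} := by
  refine card_nbij C (fun e he => by simp_all) (fun e he e' he' h => ?_) (fun d hd => ?_)
  · simp only [coe_filter, mem_univ, true_and, Set.mem_ofPred_eq] at he he'
    exact C.eq_of_mem_of_mem he.1 he'.1 h
  · obtain ⟨e, he, rfl⟩ := exists_mem_edgeSet_color hw C d
    exact ⟨e, by simpa [he] using hd, rfl⟩

theorem card_filter_mem_ne_color {w : V} (hdeg : G.degree w = n)
    (C : G.lineGraph.Coloring (Fin n)) {e : G.edgeSet} (hw : w ∈ (e : Sym2 V))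
    (p : Fin n → Prop) [DecidablePred p] :
    #{e' : G.edgeSet | w ∈ (e' : Sym2 V) ∧ e' ≠ e ∧ p (C e')} = #{d | d ≠ C e ∧ p d} := by
  rw [← card_filter_mem_edgeSet_color hdeg C (fun d => d ≠ C e ∧ p d)]
  refine congrArg card (filter_congr fun e' _ => and_congr_right fun hw' => ?_)
  rw [and_congr_left_iff]
  exact fun _ => not_congr ⟨fun h => h ▸ rfl, C.eq_of_mem_of_mem hw' hw⟩

/-- Each colour class of a proper `n`-edge-colouring of an `n`-regular graph is a perfect
matching, i.e. a fixed-point-free involution of the vertices. -/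
theorem exists_bool_flip_of_two_colors (hdeg : ∀ v, G.degree v = n)
    (C : G.lineGraph.Coloring (Fin n)) (c₁ c₂ : Fin n) :
    ∃ s : V → Bool, ∀ (e : G.edgeSet) (u v : V), (e : Sym2 V) = s(u, v) →
      (C e = c₁ ∨ C e = c₂) → s v = !s u := by
  have hnbr (c : Fin n) (v : V) : ∃ u, ∃ e : G.edgeSet, (e : Sym2 V) = s(v, u) ∧ C e = c := by
    obtain ⟨e, hv, hc⟩ := exists_mem_edgeSet_color (hdeg v) C c
    obtain ⟨u, hu⟩ := Sym2.mem_iff_exists.1 hv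
    exact ⟨u, e, hu, hc⟩
  choose σ e he hc using hnbr
  have hσ {c : Fin n} {v u : V} (e' : G.edgeSet) (he' : (e' : Sym2 V) = s(v, u))
      (hc' : C e' = c) : u = σ c v := by
    have h := C.eq_of_mem_of_mem (he' ▸ Sym2.mem_mk_left v u) (he c v ▸ Sym2.mem_mk_left _ _)
      (hc'.trans (hc c v).symm)
    exact Sym2.congr_right.1 (he' ▸ he c v ▸ congrArg Subtype.val h)
  have hinv (c : Fin n) : Involutive (σ c) := fun v =>
    (hσ (e c v) ((he c v).trans Sym2.eq_swap) (hc c v)).symm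
  have hne (c : Fin n) (v : V) : σ c v ≠ v :=
    (G.ne_of_adj (G.mem_edgeSet.1 (he c v ▸ (e c v).2))).symm
  obtain ⟨s, hs₁, hs₂⟩ := (hinv c₁).exists_bool_flip_of_involutive (hinv c₂) (hne c₁) (hne c₂)
  refine ⟨s, fun e' u v he' hc' => ?_⟩
  rcases hc' with hc' | hc' <;> rw [hσ e' he' hc']
  exacts [hs₁ u, hs₂ u]

end SimpleGraph

section

variable {V α : Type*} {G : SimpleGraph V}

noncomputable def Orient.ofColoring (C : G.lineGraph.Coloring α) (R : V → α → α → Bool)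
    (hR : ∀ w i j, i ≠ j → R w j i = !R w i j) : Orient G.lineGraph where
  dir e e' := by
    classical
    exact decide (∃ w, w ∈ (e : Sym2 V) ∧ w ∈ (e' : Sym2 V) ∧ R w (C e) (C e') = true)
  consistent e e' h := by
    obtain ⟨hne, w, hw, hw'⟩ := SimpleGraph.lineGraph_adj_iff_exists.1 h
    have hne' : (e : Sym2 V) ≠ e' := fun h' => hne (Subtype.ext h')
    rw [Sym2.exists_mem_mem_and_iff hne' hw hw', Sym2.exists_mem_mem_and_iff hne'.symm hw' hw,
      hR w _ _ (C.valid h)]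
    simp

theorem Orient.ofColoring_dir (C : G.lineGraph.Coloring α) (R : V → α → α → Bool)
    (hR : ∀ w i j, i ≠ j → R w j i = !R w i j) {e e' : G.edgeSet} {w : V} (hne : e ≠ e')
    (hw : w ∈ (e : Sym2 V)) (hw' : w ∈ (e' : Sym2 V)) :
    (Orient.ofColoring C R hR).dir e e' = R w (C e) (C e') := by
  simp only [Orient.ofColoring]
  rw [Sym2.exists_mem_mem_and_iff (fun h => hne (Subtype.ext h)) hw hw']
  simp

variable {n : ℕ} [Fintype V] [DecidableEq V] [DecidableRel G.Adj]

/-- The contribution of one endpoint, with local rule `r`, to the in-out-degree of an edge of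
colour `c`. -/
def localIODeg (r : Fin n → Fin n → Bool) (c : Fin n) : ℤ :=
  #{d | d ≠ c ∧ r d c = true} - #{d | d ≠ c ∧ r c d = true}

theorem ioDeg_ofColoring [DecidableRel G.lineGraph.Adj] (hdeg : ∀ v, G.degree v = n)
    (C : G.lineGraph.Coloring (Fin n)) (R : V → Fin n → Fin n → Bool)
    (hR : ∀ w i j, i ≠ j → R w j i = !R w i j) {e : G.edgeSet} {u v : V}
    (he : (e : Sym2 V) = s(u, v)) :
    ioDeg G.lineGraph (Orient.ofColoring C R hR) e =
      localIODeg (R u) (C e) + localIODeg (R v) (C e) := by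
  have hin {w : V} (hw : w ∈ (e : Sym2 V)) :
      #{e' : G.edgeSet | w ∈ (e' : Sym2 V) ∧ e' ≠ e ∧ (Orient.ofColoring C R hR).dir e' e} =
        #{d | d ≠ C e ∧ R w d (C e) = true} := by
    rw [← G.card_filter_mem_ne_color (hdeg w) C hw (fun d => R w d (C e) = true)]
    refine congrArg card (filter_congr fun e' _ => and_congr_right fun hw' => ?_)
    exact and_congr_right fun hne => by rw [Orient.ofColoring_dir C R hR hne hw' hw]
  have hout {w : V} (hw : w ∈ (e : Sym2 V)) :
      #{e' : G.edgeSet | w ∈ (e' : Sym2 V) ∧ e' ≠ e ∧ (Orient.ofColoring C R hR).dir e e'} =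
        #{d | d ≠ C e ∧ R w (C e) d = true} := by
    rw [← G.card_filter_mem_ne_color (hdeg w) C hw (fun d => R w (C e) d = true)]
    refine congrArg card (filter_congr fun e' _ => and_congr_right fun hw' => ?_)
    exact and_congr_right fun hne => by rw [Orient.ofColoring_dir C R hR (Ne.symm hne) hw hw']
  have hu : u ∈ (e : Sym2 V) := he ▸ Sym2.mem_mk_left u v
  have hv : v ∈ (e : Sym2 V) := he ▸ Sym2.mem_mk_right u v
  rw [ioDeg, inDeg, outDeg, G.card_filter_lineGraph_adj he, G.card_filter_lineGraph_adj he,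
    hin hu, hin hv, hout hu, hout hv, localIODeg, localIODeg]
  push_cast
  ring

end

def localArc (t : Bool) (i j : Fin 3) : Bool :=
  if t then decide (i < j) else decide (j = i + 1)

theorem localArc_swap (t : Bool) {i j : Fin 3} (h : i ≠ j) :
    localArc t j i = !localArc t i j := by
  revert t i j; decide

theorem localIODeg_localArc_add {t t' : Bool} {c : Fin 3} (h : c = 1 ∨ t' = !t) :
    localIODeg (localArc t) c + localIODeg (localArc t') c = 2 * (c : ℤ) - 2 := by
  revert t t' c; decide

/-- If a cubic graph `G` has a proper edge 3-coloring, then its line graph has an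
in-out-proper orientation with all in-out-degrees in `{-2,0,2}`; so `χ↔(H) ≤ 2`. -/
theorem stmt_18 [Fintype V] [DecidableEq V] (G : SimpleGraph V) [DecidableRel G.Adj]
    (hcubic : ∀ v, G.degree v = 3)
    [DecidableRel G.lineGraph.Adj]
    (f : G.edgeSet → Fin 3)
    (hf : ∀ e e', G.lineGraph.Adj e e' → f e ≠ f e') :
    ∃ D : Orient G.lineGraph, IsIOProper G.lineGraph D ∧
      ∀ e, ioDeg G.lineGraph D e ∈ ({-2, 0, 2} : Set ℤ) := by
  let C : G.lineGraph.Coloring (Fin 3) := SimpleGraph.Coloring.mk f (hf _ _)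
  obtain ⟨s, hs⟩ := G.exists_bool_flip_of_two_colors hcubic C 0 2
  let D := Orient.ofColoring C (fun w => localArc (s w)) fun w _ _ => localArc_swap (s w)
  have hio (e : G.edgeSet) : ioDeg G.lineGraph D e = 2 * (C e : ℤ) - 2 := by
    obtain ⟨⟨u, v⟩, he⟩ := Quot.exists_rep (e : Sym2 V)
    rw [ioDeg_ofColoring hcubic C _ _ he.symm]
    refine localIODeg_localArc_add ((em (C e = 1)).imp_right fun h1 => hs e u v he.symm ?_)
    revert h1; generalize C e = c; revert c; decide
  refine ⟨D, fun e e' h => ?_, fun e => ?_⟩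
  · rw [hio, hio]
    exact fun h' => C.valid h (Fin.ext (by omega))
  · rw [hio]
    generalize C e = c
    fin_cases c <;> simp
end
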